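/- arXiv:1006.1162 — 3 statements merged into one kernel-verified Lean document; each statement's English description precedes it below -/
import Mathlib

section
/- For nonnegative integers t ≤ B·N_t − 1 and the sequence δ_ℓ(t) = (1 + B·N_t·N_r)^{ℓ−1}·(1 + N_r·(B·N_t − t)) − 1, the minimum over j ∈ {0,…,t} of δ_ℓ(j) + (1 + δ_ℓ(j))·N_r·(B·N_t − t + j) equals δ_{ℓ+1}(t), i.e., (1 + B·N_t·N_r)^{ℓ}·(1 + N_r·(B·N_t − t)) − 1. -/
theorem stmt_3 (Nt Nr B : ℕ) (hNt : 0 < Nt) (hNr : 0 < Nr) (hB : 0 < B)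
    (ℓ : ℕ) (hℓ : 1 ≤ ℓ) (t : ℤ) (ht0 : 0 ≤ t) (ht : t ≤ (B : ℤ) * Nt - 1) :
    (Finset.Icc (0 : ℤ) t).inf'
      (Finset.nonempty_Icc.mpr ht0)
      (fun j =>
        ((1 + (B : ℤ) * Nt * Nr) ^ (ℓ - 1) * (1 + (Nr : ℤ) * ((B : ℤ) * Nt - j)) - 1) +
          (1 + ((1 + (B : ℤ) * Nt * Nr) ^ (ℓ - 1) * (1 + (Nr : ℤ) * ((B : ℤ) * Nt - j)) - 1)) *
            ((Nr : ℤ) * ((B : ℤ) * Nt - t + j)))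
      = (1 + (B : ℤ) * Nt * Nr) ^ ℓ * (1 + (Nr : ℤ) * ((B : ℤ) * Nt - t)) - 1 := by
  obtain ⟨m, rfl⟩ := Nat.exists_eq_add_of_le hℓ
  simp only [Nat.add_sub_cancel_left] at *
  have hP : (1 : ℤ) ≤ (1 + (B : ℤ) * Nt * Nr) ^ m := by
    apply one_le_pow₀
    have := (Nat.cast_pos (α := ℤ)).mpr hNt
    have := (Nat.cast_pos (α := ℤ)).mpr hNr
    have := (Nat.cast_pos (α := ℤ)).mpr hB
    nlinarith
  apply le_antisymm
  · calc (Finset.Icc (0 : ℤ) t).inf' _ _ ≤ _ :=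
          Finset.inf'_le _ (Finset.mem_Icc.mpr ⟨le_refl 0, ht0⟩)
      _ = (1 + (B : ℤ) * Nt * Nr) ^ (1 + m) * (1 + (Nr : ℤ) * ((B : ℤ) * Nt - t)) - 1 := by
          ring
  · apply Finset.le_inf'
    intro j hj
    obtain ⟨hj0, hjt⟩ := Finset.mem_Icc.mp hj
    have h1 : (0 : ℤ) ≤ j * (t - j) := mul_nonneg hj0 (by linarith)
    have h2 : (0 : ℤ) < (Nr : ℤ) := Nat.cast_pos.mpr hNr
    have key : ((1 + (B : ℤ) * Nt * Nr) ^ m * (1 + (Nr : ℤ) * ((B : ℤ) * Nt - j)) - 1) +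
        (1 + ((1 + (B : ℤ) * Nt * Nr) ^ m * (1 + (Nr : ℤ) * ((B : ℤ) * Nt - j)) - 1)) *
          ((Nr : ℤ) * ((B : ℤ) * Nt - t + j))
        - ((1 + (B : ℤ) * Nt * Nr) ^ (1 + m) * (1 + (Nr : ℤ) * ((B : ℤ) * Nt - t)) - 1)
        = (1 + (B : ℤ) * Nt * Nr) ^ m * (Nr : ℤ) * (Nr : ℤ) * (j * (t - j)) := by ring
    nlinarith [mul_nonneg (mul_nonneg (mul_nonneg (by linarith : (0:ℤ) ≤ (1 + (B : ℤ) * Nt * Nr) ^ m) (le_of_lt h2)) (le_of_lt h2)) h1]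
end

section
/- The no-feedback (constant power) diversity d̲_L(R) = N_r·(1 + ⌊B·L·(N_t − R/(L·M))⌋) satisfies d̲_L(R) ≤ L·N_r·B·N_t and, for L ≥ 2 and R < N_t·M, d̲_L(R) < d_L(R) = (1 + B·N_t·N_r)^{L−1}·(d†(R) + 1) − 1. -/
theorem stmt_9 (Nt Nr B M L : ℕ) (hNt : 0 < Nt) (hNr : 0 < Nr) (hB : 0 < B)
    (hM : 0 < M) (hL : 2 ≤ L) (R : ℝ) (hR0 : 0 < R) (hRmax : R < (Nt : ℝ) * M) :
    (Nr : ℤ) * (1 + ⌊(B : ℝ) * L * Nt - (B : ℝ) * R / M⌋) ≤ (L : ℤ) * Nr * B * Nt ∧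
      (Nr : ℤ) * (1 + ⌊(B : ℝ) * L * Nt - (B : ℝ) * R / M⌋) <
        (1 + (B : ℤ) * Nt * Nr) ^ (L - 1) *
            ((Nr : ℤ) * (1 + ⌊(B : ℝ) * ((Nt : ℝ) - R / M)⌋) + 1) - 1 := by
  have hMR : 0 < (M : ℝ) := by positivity
  have hF1 : ⌊(B : ℝ) * L * Nt - (B : ℝ) * R / M⌋ < (B : ℤ) * L * Nt := by
    rw [Int.floor_lt]
    have : 0 < (B : ℝ) * R / M := by positivity
    push_cast
    linarith
  have hF1' : 1 + ⌊(B : ℝ) * L * Nt - (B : ℝ) * R / M⌋ ≤ (B : ℤ) * L * Nt := by omega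
  have hF2 : (0 : ℤ) ≤ ⌊(B : ℝ) * ((Nt : ℝ) - R / M)⌋ := by
    apply Int.floor_nonneg.2
    have h1 : R / M < (Nt : ℝ) := by rw [div_lt_iff₀ hMR]; linarith
    have h2 : (0 : ℝ) ≤ (Nt : ℝ) - R / M := by linarith
    exact mul_nonneg (by positivity) h2
  set F1 := ⌊(B : ℝ) * L * Nt - (B : ℝ) * R / M⌋
  set F2 := ⌊(B : ℝ) * ((Nt : ℝ) - R / M)⌋
  have hNr1 : (1 : ℤ) ≤ (Nr : ℤ) := by exact_mod_cast hNr
  have hNt1 : (1 : ℤ) ≤ (Nt : ℤ) := by exact_mod_cast hNt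
  have hB1 : (1 : ℤ) ≤ (B : ℤ) := by exact_mod_cast hB
  have hL2 : (2 : ℤ) ≤ (L : ℤ) := by exact_mod_cast hL
  have hK1 : (1 : ℤ) ≤ (B : ℤ) * Nt * Nr := by
    have : 0 < B * Nt * Nr := by positivity
    exact_mod_cast this
  have hleft : (Nr : ℤ) * (1 + F1) ≤ (L : ℤ) * Nr * B * Nt := by
    calc (Nr : ℤ) * (1 + F1) ≤ (Nr : ℤ) * ((B : ℤ) * L * Nt) :=
          mul_le_mul_of_nonneg_left hF1' (by linarith)
    _ = (L : ℤ) * Nr * B * Nt := by ring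
  refine ⟨hleft, ?_⟩
  -- Bernoulli
  have hbern : 1 + ((L - 1 : ℕ) : ℤ) * ((B : ℤ) * Nt * Nr) ≤
      (1 + (B : ℤ) * Nt * Nr) ^ (L - 1) :=
    one_add_mul_le_pow (by linarith) (L - 1)
  have hcast : ((L - 1 : ℕ) : ℤ) = (L : ℤ) - 1 := by
    have : 1 ≤ L := by omega
    push_cast [this]; ring
  rw [hcast] at hbern
  have hpos : (2 : ℤ) ≤ (Nr : ℤ) * (1 + F2) + 1 := by nlinarith
  have hpowpos : (0 : ℤ) ≤ (1 + (B : ℤ) * Nt * Nr) ^ (L - 1) := by positivity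
  have hstep : (1 + (B : ℤ) * Nt * Nr) ^ (L - 1) * 2 ≤
      (1 + (B : ℤ) * Nt * Nr) ^ (L - 1) * ((Nr : ℤ) * (1 + F2) + 1) :=
    mul_le_mul_of_nonneg_left hpos hpowpos
  have hcore : (L : ℤ) * ((B : ℤ) * Nt * Nr) <
      (1 + ((L : ℤ) - 1) * ((B : ℤ) * Nt * Nr)) * 2 - 1 := by nlinarith
  calc (Nr : ℤ) * (1 + F1) ≤ (L : ℤ) * Nr * B * Nt := hleft
    _ = (L : ℤ) * ((B : ℤ) * Nt * Nr) := by ring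
    _ < (1 + ((L : ℤ) - 1) * ((B : ℤ) * Nt * Nr)) * 2 - 1 := hcore
    _ ≤ (1 + (B : ℤ) * Nt * Nr) ^ (L - 1) * 2 - 1 := by linarith
    _ ≤ _ := by linarith
end

section
/- The constrained minimization of Σ_{b,t,r} α_{b,t,r} over nonnegative arrays α ∈ ℝ_+^{B×N_t×N_r} subject to Σ_b κ_b ≤ B·R/M — where κ_b counts the number of transmit antennas t such that α_{b,t,r} ≤ 1−ε for some r — has infimum N_r·(B·N_t − ⌊B·R/M⌋)·(1−ε) = N_r·⌈B·(N_t − R/M)⌉·(1−ε). -/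
open scoped Classical

lemma aux_filter (n k : ℕ) : ((Finset.range n).filter (fun j => j < k)).card = min k n := by
  have : ((Finset.range n).filter (fun j => j < k)) = Finset.range (min k n) := by
    ext j; simp; omega
  rw [this, Finset.card_range]

lemma aux_sum (n k : ℕ) (v : ℝ) :
    ∑ j ∈ Finset.range n, (if j < k then (0:ℝ) else v) = ((n - k : ℕ) : ℝ) * v := by
  rw [Finset.sum_ite]
  have h2 : ((Finset.range n).filter (fun j => ¬ j < k)) = Finset.Ico k n := by
    ext j; simp; omega
  rw [h2]
  simp [Nat.card_Ico, mul_comm]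

lemma aux_construct (Nt Nr B : ℕ) (hNr : 0 < Nr)
    (ε : ℝ) (hε1 : ε < 1) (δ' : ℝ) (hδ' : 0 < δ') (K : ℕ) (hKle : K ≤ Nt * B) :
    ∃ α : Fin B → Fin Nt → Fin Nr → ℝ,
      (∀ b t r, 0 ≤ α b t r) ∧
      (∑ b : Fin B,
        (Finset.univ.filter (fun t : Fin Nt => ∃ r, α b t r ≤ 1 - ε)).card) = K ∧
      (∑ b : Fin B, ∑ t : Fin Nt, ∑ r : Fin Nr, α b t r)
        = (Nr : ℝ) * (((Nt * B - K : ℕ) : ℝ) * ((1 - ε) + δ')) := by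
  have hε' : (0:ℝ) < 1 - ε := by linarith
  set v : ℝ := (1 - ε) + δ' with hvdef
  set e := finProdFinEquiv (m := Nt) (n := B) with hedef
  set α : Fin B → Fin Nt → Fin Nr → ℝ :=
    fun b t _ => if ((e (t, b) : Fin (Nt * B)) : ℕ) < K then 0 else v with hαdef
  refine ⟨α, ?_, ?_, ?_⟩
  · intro b t r
    simp only [hαdef]
    split
    exacts [le_refl 0, by positivity]
  · have hfilt : ∀ b : Fin B,
        (Finset.univ.filter (fun t : Fin Nt => ∃ r : Fin Nr, α b t r ≤ 1 - ε))
          = Finset.univ.filter (fun t : Fin Nt => ((e (t, b) : Fin (Nt*B)) : ℕ) < K) := by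
      intro b
      apply Finset.filter_congr
      intro t _
      simp only [hαdef]
      constructor
      · rintro ⟨r, hr⟩
        by_contra h
        rw [if_neg h] at hr
        simp only [hvdef] at hr; linarith
      · intro h
        exact ⟨⟨0, hNr⟩, by rw [if_pos h]; linarith⟩
    simp_rw [hfilt, Finset.card_filter]
    rw [Finset.sum_comm]
    have hc := Equiv.sum_comp e (fun j : Fin (Nt*B) => if (j : ℕ) < K then 1 else 0)
    rw [Fintype.sum_prod_type] at hc
    rw [hc]
    rw [Fin.sum_univ_eq_sum_range (fun j => if j < K then 1 else 0)]
    rw [← Finset.card_filter, aux_filter, min_eq_left hKle]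
  · have hinner : ∀ b t, ∑ r : Fin Nr, α b t r
        = (Nr : ℝ) * (if ((e (t, b) : Fin (Nt*B)) : ℕ) < K then (0:ℝ) else v) := by
      intro b t
      rw [Finset.sum_const, Finset.card_univ, Fintype.card_fin, nsmul_eq_mul]
    simp_rw [hinner, ← Finset.mul_sum]
    congr 1
    rw [Finset.sum_comm]
    have hc := Equiv.sum_comp e (fun j : Fin (Nt*B) => if (j : ℕ) < K then (0:ℝ) else v)
    rw [Fintype.sum_prod_type] at hc
    rw [hc]
    rw [Fin.sum_univ_eq_sum_range (fun j => if j < K then (0:ℝ) else v)]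
    rw [aux_sum]

lemma aux_lower (Nt Nr B : ℕ) (ε : ℝ) (hε1 : ε < 1)
    (α : Fin B → Fin Nt → Fin Nr → ℝ) (hα0 : ∀ b t r, 0 ≤ α b t r) :
    ((B:ℝ)*Nt - ((∑ b : Fin B,
        (Finset.univ.filter (fun t : Fin Nt => ∃ r, α b t r ≤ 1 - ε)).card : ℕ) : ℝ))
        * ((Nr:ℝ)*(1-ε))
      ≤ ∑ b : Fin B, ∑ t : Fin Nt, ∑ r : Fin Nr, α b t r := by
  have hε' : (0:ℝ) ≤ 1 - ε := by linarith
  set F : Fin B → Finset (Fin Nt) :=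
    fun b => Finset.univ.filter (fun t : Fin Nt => ∃ r, α b t r ≤ 1 - ε) with hF
  have hb : ∀ b : Fin B,
      ((Nt:ℝ) - (F b).card) * ((Nr:ℝ)*(1-ε)) ≤ ∑ t : Fin Nt, ∑ r : Fin Nr, α b t r := by
    intro b
    have h1 : ∑ t ∈ (F b)ᶜ, ∑ r : Fin Nr, α b t r ≤ ∑ t : Fin Nt, ∑ r : Fin Nr, α b t r := by
      apply Finset.sum_le_sum_of_subset_of_nonneg (Finset.subset_univ _)
      intro t _ _
      exact Finset.sum_nonneg fun r _ => hα0 b t r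
    have h2 : ∀ t ∈ (F b)ᶜ, (Nr:ℝ)*(1-ε) ≤ ∑ r : Fin Nr, α b t r := by
      intro t ht
      rw [Finset.mem_compl, hF, Finset.mem_filter] at ht
      push_neg at ht
      have ht' := ht (Finset.mem_univ t)
      calc (Nr:ℝ)*(1-ε) = ∑ _r : Fin Nr, (1-ε) := by
            rw [Finset.sum_const, Finset.card_univ, Fintype.card_fin, nsmul_eq_mul]
        _ ≤ ∑ r : Fin Nr, α b t r := Finset.sum_le_sum fun r _ => le_of_lt (ht' r)
    calc ((Nt:ℝ) - (F b).card) * ((Nr:ℝ)*(1-ε))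
        = ((((F b)ᶜ).card : ℝ)) * ((Nr:ℝ)*(1-ε)) := by
          rw [Finset.card_compl, Fintype.card_fin]
          congr 1
          rw [Nat.cast_sub (Finset.card_le_univ (F b) |>.trans (by simp))]
      _ = ∑ t ∈ (F b)ᶜ, (Nr:ℝ)*(1-ε) := by
          rw [Finset.sum_const, nsmul_eq_mul]
      _ ≤ ∑ t ∈ (F b)ᶜ, ∑ r : Fin Nr, α b t r := Finset.sum_le_sum h2
      _ ≤ _ := h1
  calc ((B:ℝ)*Nt - ((∑ b : Fin B, (F b).card : ℕ) : ℝ)) * ((Nr:ℝ)*(1-ε))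
      = ∑ b : Fin B, ((Nt:ℝ) - (F b).card) * ((Nr:ℝ)*(1-ε)) := by
        rw [← Finset.sum_mul]
        congr 1
        rw [Finset.sum_sub_distrib, Finset.sum_const, Finset.card_univ, Fintype.card_fin,
          nsmul_eq_mul, Nat.cast_sum]
    _ ≤ ∑ b : Fin B, ∑ t : Fin Nt, ∑ r : Fin Nr, α b t r := Finset.sum_le_sum fun b _ => hb b

theorem stmt_15 (Nt Nr B M : ℕ) (hNt : 0 < Nt) (hNr : 0 < Nr) (hB : 0 < B)
    (hM : 0 < M) (R ε : ℝ) (hR0 : 0 < R) (hRmax : R < (Nt : ℝ) * M)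
    (hε0 : 0 < ε) (hε1 : ε < 1) :
    sInf {s : ℝ | ∃ α : Fin B → Fin Nt → Fin Nr → ℝ,
        (∀ b t r, 0 ≤ α b t r) ∧
        ((∑ b : Fin B,
            (Finset.univ.filter (fun t : Fin Nt => ∃ r, α b t r ≤ 1 - ε)).card : ℕ) : ℝ)
          ≤ (B : ℝ) * R / M ∧
        s = ∑ b : Fin B, ∑ t : Fin Nt, ∑ r : Fin Nr, α b t r} =
      (Nr : ℝ) * (((B : ℝ) * Nt - ⌊(B : ℝ) * R / M⌋)) * (1 - ε) ∧
    (Nr : ℝ) * (((B : ℝ) * Nt - ⌊(B : ℝ) * R / M⌋)) * (1 - ε) =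
      (Nr : ℝ) * ⌈(B : ℝ) * ((Nt : ℝ) - R / M)⌉ * (1 - ε) := by
  have hε' : (0:ℝ) < 1 - ε := by linarith
  set x : ℝ := (B : ℝ) * R / M with hxdef
  have hx0 : 0 ≤ x := by positivity
  have hxlt : x < (B : ℝ) * Nt := by
    rw [hxdef, div_lt_iff₀ (by positivity)]
    calc (B:ℝ) * R < (B:ℝ) * ((Nt:ℝ) * M) := by
          exact mul_lt_mul_of_pos_left hRmax (by exact_mod_cast hB)
    _ = (B:ℝ) * Nt * M := by ring
  set K : ℕ := ⌊x⌋.toNat with hKdef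
  have hfloor : (⌊x⌋ : ℝ) = (K : ℝ) := by
    rw [hKdef]
    norm_cast
    exact (Int.toNat_of_nonneg (Int.floor_nonneg.2 hx0)).symm
  have hKx : (K : ℝ) ≤ x := hfloor ▸ Int.floor_le x
  have hKlt : (K : ℝ) < (B:ℝ) * Nt := lt_of_le_of_lt hKx hxlt
  have hKltn : K < B * Nt := by exact_mod_cast hKlt
  have hKle : K ≤ Nt * B := by rw [Nat.mul_comm]; omega
  have hcastK : ((Nt * B - K : ℕ) : ℝ) = (B:ℝ) * Nt - K := by
    rw [Nat.cast_sub hKle]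
    push_cast
    ring
  set c : ℝ := (Nr : ℝ) * ((B:ℝ) * Nt - (K:ℝ)) * (1 - ε) with hcdef
  set S : Set ℝ := {s : ℝ | ∃ α : Fin B → Fin Nt → Fin Nr → ℝ,
        (∀ b t r, 0 ≤ α b t r) ∧
        ((∑ b : Fin B,
            (Finset.univ.filter (fun t : Fin Nt => ∃ r, α b t r ≤ 1 - ε)).card : ℕ) : ℝ)
          ≤ x ∧
        s = ∑ b : Fin B, ∑ t : Fin Nt, ∑ r : Fin Nr, α b t r} with hSdef
  have hlowS : ∀ s ∈ S, c ≤ s := by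
    rintro s ⟨α, hα0, hκ, rfl⟩
    have hκn : (∑ b : Fin B,
        (Finset.univ.filter (fun t : Fin Nt => ∃ r, α b t r ≤ 1 - ε)).card) ≤ K := by
      have h1 : ((∑ b : Fin B,
          (Finset.univ.filter (fun t : Fin Nt => ∃ r, α b t r ≤ 1 - ε)).card : ℕ) : ℤ)
          ≤ ⌊x⌋ := Int.le_floor.2 (by exact_mod_cast hκ)
      omega
    have h2 := aux_lower Nt Nr B ε hε1 α hα0
    have h3 : ((∑ b : Fin B,
        (Finset.univ.filter (fun t : Fin Nt => ∃ r, α b t r ≤ 1 - ε)).card : ℕ) : ℝ)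
        ≤ (K : ℝ) := by exact_mod_cast hκn
    have h4 : c ≤ ((B:ℝ)*Nt - ((∑ b : Fin B,
        (Finset.univ.filter (fun t : Fin Nt => ∃ r, α b t r ≤ 1 - ε)).card : ℕ) : ℝ))
        * ((Nr:ℝ)*(1-ε)) := by
      rw [hcdef]
      have h5 : (Nr:ℝ) * ((B:ℝ)*Nt - (K:ℝ)) * (1-ε)
          = ((B:ℝ)*Nt - (K:ℝ)) * ((Nr:ℝ)*(1-ε)) := by ring
      rw [h5]
      apply mul_le_mul_of_nonneg_right (by linarith) (by positivity)
    linarith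
  have hSne : S.Nonempty := by
    obtain ⟨α, hα0, hκ, hsum⟩ := aux_construct Nt Nr B hNr ε hε1 1 one_pos K hKle
    exact ⟨_, α, hα0, by rw [hκ]; exact hKx, hsum.symm⟩
  have hbdd : BddBelow S := ⟨c, hlowS⟩
  have hfirst : sInf S = c := by
    apply le_antisymm
    · rw [Real.sInf_le_iff hbdd hSne]
      intro δ hδ
      set D : ℝ := (Nr:ℝ) * ((B:ℝ)*Nt - (K:ℝ)) with hDdef
      have hD0 : 0 ≤ D := by
        apply mul_nonneg (by positivity)
        linarith
      have hδ' : 0 < δ / (D + 1) := by positivity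
      obtain ⟨α, hα0, hκ, hsum⟩ := aux_construct Nt Nr B hNr ε hε1 _ hδ' K hKle
      refine ⟨_, ⟨α, hα0, by rw [hκ]; exact hKx, hsum.symm⟩, ?_⟩
      rw [hcastK]
      have hlt : D * (δ / (D + 1)) < δ := by
        have h9 : D * (δ / (D + 1)) = (D * δ) / (D + 1) := by ring
        rw [h9, div_lt_iff₀ (by linarith)]
        nlinarith
      calc (Nr:ℝ) * (((B:ℝ)*Nt - K) * ((1-ε) + δ/(D+1)))
          = c + D * (δ / (D+1)) := by rw [hcdef, hDdef]; ring
        _ < c + δ := by linarith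
    · exact le_csInf hSne hlowS
  constructor
  · rw [hfloor]
    exact hfirst
  · have h1 : (B:ℝ)*((Nt:ℝ) - R/M) = -x + (((B*Nt : ℕ) : ℤ) : ℝ) := by
      rw [hxdef]; push_cast; ring
    rw [h1, Int.ceil_add_intCast, Int.ceil_neg]
    push_cast
    ring
end
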